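/- arXiv:2112.15376 — 2 statements merged into one kernel-verified Lean document; each statement's English description precedes it below -/
import Mathlib

section
/- The class of positive Radon measures μ on ℝⁿ with the property that every Lipschitz function f : ℝⁿ → ℝ can, for every ε > 0, be modified on a set of μ-measure less than ε to agree with a C¹ function, is closed under finite sums: if μ₁ and μ₂ both have this Lusin-type C¹ approximation property, then so does μ₁ + μ₂. -/
open MeasureTheory Metric Set Filter Topology ENNReal

/-- A measure `μ` on `ℝⁿ` has the Lusin-type `C¹` approximation property: every
Lipschitz function can be modified on a set of `μ`-measure `< ε` to a `C¹` function. -/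
def HasLusinC1Property (n : ℕ) (μ : Measure (EuclideanSpace ℝ (Fin n))) : Prop :=
  ∀ f : EuclideanSpace ℝ (Fin n) → ℝ, (∃ C, LipschitzWith C f) →
    ∀ ε : ℝ≥0∞, 0 < ε →
      ∃ g : EuclideanSpace ℝ (Fin n) → ℝ, ContDiff ℝ 1 g ∧ μ {x | g x ≠ f x} < ε

/-! Take `C¹` functions `g₁, g₂` with `A = {g₁ ≠ f}` small for `μ₁` and `B = {g₂ ≠ f}` small
for `μ₂`, and glue them as `φ g₁ + (1 - φ) g₂` with `φ` smooth. Off `A ∪ B` this equals `f`, so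
it suffices that `φ = 1` on `μ₁`-most of `B \ A` and `φ = 0` on `μ₂`-most of `A \ B`. These sets
are disjoint, and inner regularity by closed sets (which holds for locally finite measures of
infinite mass too, by cutting the space into compact shells) gives disjoint closed subsets
carrying almost all of their mass; smooth Urysohn separates them. -/

open scoped Manifold

section InnerRegularity

variable {X : Type*} [TopologicalSpace X] [T2Space X] [WeaklyLocallyCompactSpace X]
  [SigmaCompactSpace X] [MeasurableSpace X] [OpensMeasurableSpace X]
  {μ : Measure X} [IsLocallyFiniteMeasure μ] [μ.WeaklyRegular]

theorem MeasurableSet.exists_isClosed_sdiff_lt_of_isLocallyFiniteMeasure {A : Set X}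
    (hA : MeasurableSet A) {ε : ℝ≥0∞} (hε : ε ≠ 0) :
    ∃ F ⊆ A, IsClosed F ∧ μ (A \ F) < ε := by
  let K₀ := CompactExhaustion.choice X
  let K := K₀.shiftr
  obtain ⟨δ, δpos, hδ⟩ := ENNReal.exists_pos_sum_of_countable hε ℕ
  let S n := A ∩ (K (n + 1) \ K n)
  have hS : ∀ n, ∃ F ⊆ S n, IsClosed F ∧ μ (S n \ F) < δ n := fun n =>
    have hSm : MeasurableSet (S n) :=
      hA.inter ((K.isCompact _).measurableSet.diff (K.isCompact _).measurableSet)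
    have hSμ : μ (S n) < ∞ := (measure_mono (inter_subset_right.trans sdiff_subset)).trans_lt
      (K.isCompact _).measure_lt_top
    hSm.exists_isClosed_sdiff_lt hSμ.ne (mod_cast (δpos n).ne')
  choose F hFS hFc hFμ using hS
  refine ⟨⋃ n, F n, iUnion_subset fun n => (hFS n).trans inter_subset_left, ?_, ?_⟩
  · refine LocallyFinite.isClosed_iUnion (fun x => ?_) hFc
    obtain ⟨m, hm⟩ := K.exists_mem_nhds x
    refine ⟨K m, hm, (finite_lt_nat m).subset fun n ⟨y, hyF, hyK⟩ => ?_⟩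
    by_contra hmn
    exact (hFS n hyF).2.2 (K.subset (not_lt.1 hmn) hyK)
  · have hcover : A \ ⋃ n, F n ⊆ ⋃ n, S n \ F n := fun x ⟨hxA, hxF⟩ =>
      mem_iUnion.2 ⟨K₀.find x, ⟨hxA, K₀.mem_sdiff_shiftr_find x⟩,
        fun h => hxF (mem_iUnion.2 ⟨_, h⟩)⟩
    calc μ (A \ ⋃ n, F n) ≤ ∑' n, μ (S n \ F n) := (measure_mono hcover).trans (measure_iUnion_le _)
      _ ≤ ∑' n, (δ n : ℝ≥0∞) := ENNReal.tsum_le_tsum fun n => (hFμ n).le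
      _ < ε := hδ

end InnerRegularity

theorem exists_contDiff_eqOn_zero_eqOn_one {E : Type*} [NormedAddCommGroup E] [NormedSpace ℝ E]
    [FiniteDimensional ℝ E] {s t : Set E} (hs : IsClosed s) (ht : IsClosed t) (hd : Disjoint s t)
    {k : ℕ∞} : ∃ φ : E → ℝ, ContDiff ℝ k φ ∧ EqOn φ 0 s ∧ EqOn φ 1 t := by
  obtain ⟨φ, hφs, hφt, -⟩ := exists_contMDiffMap_zero_one_of_isClosed (n := k) 𝓘(ℝ, E) hs ht hd
  exact ⟨φ, contMDiff_iff_contDiff.1 φ.contMDiff, hφs, hφt⟩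

theorem measure_setOf_ne_le_of_eqOn {α β : Type*} [MeasurableSpace α] (μ : Measure α)
    {f g g₁ g₂ : α → β} {F : Set α} (hF : EqOn g g₁ F)
    (hg : ∀ x, g₁ x = f x → g₂ x = f x → g x = f x) :
    μ {x | g x ≠ f x} ≤ μ {x | g₁ x ≠ f x} + μ (({x | g₂ x ≠ f x} \ {x | g₁ x ≠ f x}) \ F) := by
  refine (measure_mono fun x hx => ?_).trans (measure_union_le _ _)
  by_cases h₁ : g₁ x = f x
  · exact Or.inr ⟨⟨fun h₂ => hx (hg x h₁ h₂), not_not.2 h₁⟩, fun hxF => hx ((hF hxF).trans h₁)⟩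
  · exact Or.inl h₁

theorem lusinC1_add (n : ℕ) (μ₁ μ₂ : Measure (EuclideanSpace ℝ (Fin n)))
    [IsLocallyFiniteMeasure μ₁] [IsLocallyFiniteMeasure μ₂]
    (h₁ : HasLusinC1Property n μ₁) (h₂ : HasLusinC1Property n μ₂) :
    HasLusinC1Property n (μ₁ + μ₂) := by
  intro f hf ε hε
  have hε' : ε / 2 / 2 ≠ 0 := (ENNReal.half_pos (ENNReal.half_pos hε.ne').ne').ne'
  obtain ⟨g₁, hg₁, hμA⟩ := h₁ f hf (ε / 2 / 2) (pos_iff_ne_zero.2 hε')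
  obtain ⟨g₂, hg₂, hμB⟩ := h₂ f hf (ε / 2 / 2) (pos_iff_ne_zero.2 hε')
  have hfc : Continuous f := hf.elim fun _ hC => hC.continuous
  have hA := (isOpen_ne_fun hg₁.continuous hfc).measurableSet
  have hB := (isOpen_ne_fun hg₂.continuous hfc).measurableSet
  obtain ⟨F₁, hF₁, hF₁c, hμF₁⟩ :=
    (hB.diff hA).exists_isClosed_sdiff_lt_of_isLocallyFiniteMeasure (μ := μ₁) hε'
  obtain ⟨F₂, hF₂, hF₂c, hμF₂⟩ :=
    (hA.diff hB).exists_isClosed_sdiff_lt_of_isLocallyFiniteMeasure (μ := μ₂) hε'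
  obtain ⟨φ, hφ, hφ₀, hφ₁⟩ := exists_contDiff_eqOn_zero_eqOn_one (k := 1) hF₂c hF₁c
    (disjoint_sdiff_sdiff.mono hF₂ hF₁)
  let g x := φ x * g₁ x + (1 - φ x) * g₂ x
  have hg : ∀ x, g₁ x = f x → g₂ x = f x → g x = f x := fun x h₁ h₂ => by
    simp only [g, h₁, h₂]; ring
  have hμ₁ : μ₁ {x | g x ≠ f x} < ε / 2 / 2 + ε / 2 / 2 :=
    (measure_setOf_ne_le_of_eqOn μ₁ (fun x hx => by simp [g, hφ₁ hx]) hg).trans_lt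
      (ENNReal.add_lt_add hμA hμF₁)
  have hμ₂ : μ₂ {x | g x ≠ f x} < ε / 2 / 2 + ε / 2 / 2 :=
    (measure_setOf_ne_le_of_eqOn μ₂ (fun x hx => by simp [g, hφ₀ hx])
      fun x h₂ h₁ => hg x h₁ h₂).trans_lt (ENNReal.add_lt_add hμB hμF₂)
  refine ⟨g, (hφ.mul hg₁).add ((contDiff_const.sub hφ).mul hg₂), ?_⟩
  calc (μ₁ + μ₂) {x | g x ≠ f x} < (ε / 2 / 2 + ε / 2 / 2) + (ε / 2 / 2 + ε / 2 / 2) :=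
        ENNReal.add_lt_add hμ₁ hμ₂
    _ = ε := by rw [ENNReal.add_halves, ENNReal.add_halves]
end

section
/- Let k ∈ {1,…,n−1}, let V be a k-plane in ℝⁿ with orthonormal basis e_{k+1},…,e_n of its orthogonal complement V^⊥, and let α ∈ (0,1). Then the 2(n−k) one-sided cones C(±e_j, α/(n−k)) for j = k+1,…,n cover ℝⁿ ∖ X(0,V,√(1−α²)). -/
open MeasureTheory Metric Set Filter Topology ENNReal

/-- The one-sided cone `C(e,β) = {v : ⟨v,e⟩ ≥ β|v|}`. -/
def oneSidedCone {n : ℕ} (e : EuclideanSpace ℝ (Fin n)) (β : ℝ) :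
    Set (EuclideanSpace ℝ (Fin n)) :=
  {v | β * ‖v‖ ≤ inner ℝ v e}

/-! Since `‖p_V v‖² < (1 - α²)‖v‖²`, Pythagoras gives `‖p_{V^⊥} v‖² > α²‖v‖²`, and by Parseval
this is `∑ⱼ ⟨v, eⱼ⟩²`. Some one of the `n - k` terms therefore exceeds `α²‖v‖²/(n - k)`, hence
`|⟨v, eⱼ⟩| ≥ α/(n - k) ‖v‖`, and the sign of `⟨v, eⱼ⟩` picks the cone. -/

open Submodule

theorem Orthonormal.sum_sq_norm_inner_eq_norm_sq_starProjection {𝕜 E ι : Type*} [RCLike 𝕜]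
    [NormedAddCommGroup E] [InnerProductSpace 𝕜 E] [Fintype ι] {e : ι → E}
    (he : Orthonormal 𝕜 e) {K : Submodule 𝕜 E} [K.HasOrthogonalProjection]
    (hK : span 𝕜 (range e) = K) (v : E) :
    ∑ i, ‖inner 𝕜 (e i) v‖ ^ 2 = ‖K.starProjection v‖ ^ 2 := by
  subst hK
  have hrange : range (fun i ↦ (⟨e i, subset_span (mem_range_self i)⟩ : span 𝕜 (range e))) =
      (↑) ⁻¹' range e := by
    ext; simp [Subtype.ext_iff]
  let b : OrthonormalBasis ι 𝕜 (span 𝕜 (range e)) :=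
    .mk (orthonormal_span he) (by rw [hrange, span_span_coe_preimage])
  rw [starProjection_apply, norm_coe, ← b.sum_sq_norm_inner_right]
  simp [b]

theorem sq_mul_norm_sq_lt_norm_sq_starProjection_orthogonal {𝕜 E : Type*} [RCLike 𝕜]
    [NormedAddCommGroup E] [InnerProductSpace 𝕜 E] (K : Submodule 𝕜 E)
    [K.HasOrthogonalProjection] {α : ℝ} {v : E}
    (hv : ‖K.starProjection v‖ < √(1 - α ^ 2) * ‖v‖) :
    α ^ 2 * ‖v‖ ^ 2 < ‖Kᗮ.starProjection v‖ ^ 2 := by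
  have hsqrt : 0 < √(1 - α ^ 2) :=
    pos_of_mul_pos_left ((norm_nonneg _).trans_lt hv) (norm_nonneg v)
  have hK : ‖K.starProjection v‖ ^ 2 < (1 - α ^ 2) * ‖v‖ ^ 2 := by
    calc ‖K.starProjection v‖ ^ 2 < (√(1 - α ^ 2) * ‖v‖) ^ 2 :=
          pow_lt_pow_left₀ hv (norm_nonneg _) two_ne_zero
      _ = (1 - α ^ 2) * ‖v‖ ^ 2 := by
          rw [mul_pow, Real.sq_sqrt (Real.sqrt_pos.mp hsqrt).le]
  linarith [norm_sq_eq_add_norm_sq_starProjection v K]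

theorem Fintype.exists_div_card_lt_of_lt_sum {ι R : Type*} [Fintype ι] [Nonempty ι] [Field R]
    [LinearOrder R] [IsStrictOrderedRing R] {f : ι → R} {c : R} (h : c < ∑ i, f i) :
    ∃ i, c / Fintype.card ι < f i := by
  have hcard : (Fintype.card ι : R) ≠ 0 := Nat.cast_ne_zero.mpr Fintype.card_ne_zero
  obtain ⟨i, -, hi⟩ := Finset.exists_lt_of_sum_lt (s := Finset.univ)
    (f := fun _ ↦ c / Fintype.card ι) (g := f) <| by
      rwa [Finset.sum_const, Finset.card_univ, nsmul_eq_mul, mul_div_cancel₀ _ hcard]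
  exact ⟨i, hi⟩

theorem exists_sign_mem_oneSidedCone {n : ℕ} {β : ℝ} {v e : EuclideanSpace ℝ (Fin n)}
    (h : β * ‖v‖ ≤ |inner ℝ v e|) :
    ∃ s : ℝ, (s = 1 ∨ s = -1) ∧ v ∈ oneSidedCone (s • e) β := by
  rcases le_total 0 (inner ℝ v e) with h0 | h0
  · exact ⟨1, .inl rfl, by simpa [oneSidedCone, abs_of_nonneg h0] using h⟩
  · exact ⟨-1, .inr rfl, by simpa [oneSidedCone, inner_smul_right, abs_of_nonpos h0] using h⟩

theorem cones_cover_complement_of_coneX_general (n k : ℕ) (hkn : k < n)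
    (V : Submodule ℝ (EuclideanSpace ℝ (Fin n)))
    (e : Fin (n - k) → EuclideanSpace ℝ (Fin n)) (he : Orthonormal ℝ e)
    (hspan : Submodule.span ℝ (Set.range e) = Vᗮ)
    (α : ℝ)
    (v : EuclideanSpace ℝ (Fin n))
    (hv : ¬ (Real.sqrt (1 - α ^ 2) * ‖v‖ ≤
      ‖(Submodule.orthogonalProjection V v : EuclideanSpace ℝ (Fin n))‖)) :
    ∃ (j : Fin (n - k)) (s : ℝ), (s = 1 ∨ s = -1) ∧
      v ∈ oneSidedCone (s • e j) (α / (n - k : ℕ)) := by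
  have : Nonempty (Fin (n - k)) := ⟨⟨0, by omega⟩⟩
  have hm : (1 : ℝ) ≤ (n - k : ℕ) := by exact_mod_cast (by omega : 1 ≤ n - k)
  have hperp := sq_mul_norm_sq_lt_norm_sq_starProjection_orthogonal V (not_le.mp hv)
  rw [← he.sum_sq_norm_inner_eq_norm_sq_starProjection hspan] at hperp
  obtain ⟨j, hj⟩ := Fintype.exists_div_card_lt_of_lt_sum hperp
  rw [Fintype.card_fin, Real.norm_eq_abs, sq_abs, real_inner_comm] at hj
  have hsq : (α / (n - k : ℕ) * ‖v‖) ^ 2 ≤ inner ℝ v (e j) ^ 2 :=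
    calc (α / (n - k : ℕ) * ‖v‖) ^ 2 = α ^ 2 * ‖v‖ ^ 2 / (n - k : ℕ) / (n - k : ℕ) := by ring
      _ ≤ α ^ 2 * ‖v‖ ^ 2 / (n - k : ℕ) := div_le_self (by positivity) hm
      _ ≤ inner ℝ v (e j) ^ 2 := hj.le
  obtain ⟨s, hs, hcone⟩ :=
    exists_sign_mem_oneSidedCone ((le_abs_self _).trans (sq_le_sq.mp hsq))
  exact ⟨j, s, hs, hcone⟩

theorem cones_cover_complement_of_coneX (n k : ℕ) (hk : 1 ≤ k) (hkn : k < n)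
    (V : Submodule ℝ (EuclideanSpace ℝ (Fin n))) (hV : Module.finrank ℝ V = k)
    (e : Fin (n - k) → EuclideanSpace ℝ (Fin n)) (he : Orthonormal ℝ e)
    (heV : ∀ j, e j ∈ Vᗮ) (hspan : Submodule.span ℝ (Set.range e) = Vᗮ)
    (α : ℝ) (hα : α ∈ Set.Ioo (0:ℝ) 1)
    (v : EuclideanSpace ℝ (Fin n))
    (hv : ¬ (Real.sqrt (1 - α ^ 2) * ‖v‖ ≤
      ‖(Submodule.orthogonalProjection V v : EuclideanSpace ℝ (Fin n))‖)) :
    ∃ (j : Fin (n - k)) (s : ℝ), (s = 1 ∨ s = -1) ∧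
      v ∈ oneSidedCone (s • e j) (α / (n - k : ℕ)) :=
  cones_cover_complement_of_coneX_general n k hkn V e he hspan α v hv
end
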